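/- arXiv:1404.4622 — 5 statements merged into one kernel-verified Lean document; each statement's English description precedes it below -/
import Mathlib

section
/- Let n_1 < n_2 < … < n_ℓ be pairwise coprime positive integers and let γ be a natural number with γ + 1 ≤ ℓ. Set n = n_1 + … + n_ℓ and M = n_1·n_2·⋯·n_{γ+1}. For each integer i with 0 ≤ i < M define S_i = { 1 + (n_1 + … + n_{j−1}) + (i mod n_j) : j ∈ {1,…,ℓ} } ⊆ {1,…,n}. Then the family {S_i : 0 ≤ i < M} is an (n, ℓ, γ)-sharing set family of size M; that is, every S_i has exactly ℓ elements, and for all 0 ≤ i < j < M one has |S_i ∩ S_j| ≤ γ (in particular the S_i are pairwise distinct). -/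
section Aux

variable {ℓ : ℕ} (nn : Fin ℓ → ℕ)

/-- prefix sum -/
private def Pre (j : Fin ℓ) : ℕ := ∑ k ∈ Finset.univ.filter (fun k => k < j), nn k

private lemma pre_add_le (hpos : ∀ j, 0 < nn j) {j j' : Fin ℓ} (h : j < j') :
    Pre nn j + nn j ≤ Pre nn j' := by
  have hsub : insert j (Finset.univ.filter (fun k => k < j)) ⊆
      Finset.univ.filter (fun k => k < j') := by
    intro x hx
    simp only [Finset.mem_insert, Finset.mem_filter, Finset.mem_univ, true_and] at *
    rcases hx with rfl | hx
    · exact h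
    · exact lt_trans hx h
  have hnotmem : j ∉ Finset.univ.filter (fun k => k < j) := by simp
  have := Finset.sum_le_sum_of_subset hsub (f := nn)
  rw [Finset.sum_insert hnotmem] at this
  unfold Pre; omega

private lemma key_inj (hpos : ∀ j, 0 < nn j) {j j' : Fin ℓ} {r r' : ℕ}
    (hr : r < nn j) (hr' : r' < nn j') (heq : Pre nn j + r = Pre nn j' + r') : j = j' := by
  rcases lt_trichotomy j j' with h | h | h
  · have := pre_add_le nn hpos h; omega
  · exact h
  · have := pre_add_le nn hpos h; omega

private lemma strictMono_le {c : ℕ} (g : Fin c → Fin ℓ) (hg : StrictMono g) :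
    ∀ m (h : m < c), m ≤ (g ⟨m, h⟩ : ℕ) := by
  intro m
  induction m with
  | zero => intro h; exact Nat.zero_le _
  | succ m ih =>
    intro h
    have hm : m < c := Nat.lt_of_succ_lt h
    have h1 : g ⟨m, hm⟩ < g ⟨m + 1, h⟩ := by
      apply hg; exact Nat.lt_succ_self m
    have := ih hm
    have h2 : ((g ⟨m, hm⟩ : Fin ℓ) : ℕ) < ((g ⟨m + 1, h⟩ : Fin ℓ) : ℕ) := h1
    omega

end Aux

/-- The Chinese-Remainder-Theorem construction of Blocki et al. gives an
(N, ℓ, γ)-sharing set family of size M = n_1 ⋯ n_{γ+1}. -/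
theorem stmt0 (ℓ γ : ℕ) (hγ : γ + 1 ≤ ℓ) (nn : Fin ℓ → ℕ)
    (hpos : ∀ j, 0 < nn j) (hmono : StrictMono nn)
    (hcop : ∀ s t : Fin ℓ, s ≠ t → Nat.Coprime (nn s) (nn t))
    (N M : ℕ) (hN : N = ∑ j, nn j)
    (hM : M = ∏ j ∈ Finset.univ.filter (fun j : Fin ℓ => (j : ℕ) < γ + 1), nn j)
    (S : ℕ → Finset ℕ)
    (hS : ∀ i, S i = Finset.image (fun j : Fin ℓ =>
        1 + (∑ k ∈ Finset.univ.filter (fun k => k < j), nn k) + i % nn j) Finset.univ) :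
    (∀ i < M, S i ⊆ Finset.Icc 1 N) ∧
    (∀ i < M, (S i).card = ℓ) ∧
    (∀ i j, i < j → j < M → (S i ∩ S j).card ≤ γ) ∧
    (∀ i j, i < M → j < M → i ≠ j → S i ≠ S j) := by
  -- abbreviation for the generating function
  set f : ℕ → Fin ℓ → ℕ := fun i j => 1 + Pre nn j + i % nn j with hf
  have hS' : ∀ i, S i = Finset.image (f i) Finset.univ := hS
  have hmodlt : ∀ i (j : Fin ℓ), i % nn j < nn j := fun i j => Nat.mod_lt _ (hpos j)
  -- injectivity of f i
  have hinj : ∀ i, Function.Injective (f i) := by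
    intro i j j' h
    simp only [hf] at h
    exact key_inj nn hpos (hmodlt i j) (hmodlt i j') (by omega)
  -- part 1 : subset of Icc
  have part1 : ∀ i, S i ⊆ Finset.Icc 1 N := by
    intro i x hx
    rw [hS'] at hx
    obtain ⟨j, -, rfl⟩ := Finset.mem_image.mp hx
    have h1 : Pre nn j + nn j ≤ N := by
      rw [hN]
      have hsub : insert j (Finset.univ.filter (fun k => k < j)) ⊆ Finset.univ :=
        Finset.subset_univ _
      have hnm : j ∉ Finset.univ.filter (fun k => k < j) := by simp
      have := Finset.sum_le_sum_of_subset hsub (f := nn)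
      rw [Finset.sum_insert hnm] at this
      unfold Pre; omega
    have := hmodlt i j
    simp only [Finset.mem_Icc, hf]
    omega
  -- part 2 : cardinality
  have part2 : ∀ i, (S i).card = ℓ := by
    intro i
    rw [hS', Finset.card_image_of_injective _ (hinj i), Finset.card_univ, Fintype.card_fin]
  -- key counting lemma for intersections
  have part3 : ∀ i j, i < j → j < M → (S i ∩ S j).card ≤ γ := by
    intro i j hij hjM
    set T : Finset (Fin ℓ) := Finset.univ.filter (fun t => i % nn t = j % nn t) with hT
    have hsub : S i ∩ S j ⊆ Finset.image (f i) T := by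
      intro x hx
      obtain ⟨hxi, hxj⟩ := Finset.mem_inter.mp hx
      rw [hS'] at hxi hxj
      obtain ⟨t, -, rfl⟩ := Finset.mem_image.mp hxi
      obtain ⟨t', -, heq⟩ := Finset.mem_image.mp hxj
      have : t' = t := key_inj nn hpos (hmodlt j t') (hmodlt i t) (by simp only [hf] at heq; omega)
      subst this
      have hmem : t' ∈ T := by
        simp only [hT, Finset.mem_filter, Finset.mem_univ, true_and]
        simp only [hf] at heq; omega
      exact Finset.mem_image.mpr ⟨t', hmem, rfl⟩
    have hcard : (S i ∩ S j).card ≤ T.card :=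
      le_trans (Finset.card_le_card hsub) (Finset.card_image_le)
    by_contra hcon
    push_neg at hcon
    have hTcard : γ + 1 ≤ T.card := by omega
    -- extract a subset of size γ+1
    obtain ⟨T', hT'sub, hT'card⟩ := Finset.exists_subset_card_eq hTcard
    -- product over T' is at least M
    have hMle : M ≤ ∏ t ∈ T', nn t := by
      rw [hM]
      -- rewrite the filter set as image of castLE
      have hAeq : Finset.univ.filter (fun j : Fin ℓ => (j : ℕ) < γ + 1) =
          Finset.image (Fin.castLE hγ) Finset.univ := by
        ext x
        simp only [Finset.mem_filter, Finset.mem_univ, true_and, Finset.mem_image]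
        constructor
        · intro hx; exact ⟨⟨x, hx⟩, rfl⟩
        · rintro ⟨y, rfl⟩; exact y.2
      rw [hAeq, Finset.prod_image (by intro a _ b _ h; exact Fin.castLE_injective hγ h)]
      -- product over T' via orderEmbOfFin
      have himg : Finset.image (fun k => T'.orderEmbOfFin hT'card k) Finset.univ = T' := by
        ext x
        simp only [Finset.mem_image, Finset.mem_univ, true_and]
        constructor
        · rintro ⟨k, rfl⟩; exact Finset.orderEmbOfFin_mem _ _ _
        · intro hx
          have hx' : x ∈ Set.range (T'.orderEmbOfFin hT'card) := by
            rw [Finset.range_orderEmbOfFin]; exact hx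
          exact hx'
      rw [← himg, Finset.prod_image
        (fun a _ b _ h => (T'.orderEmbOfFin hT'card).injective h)]
      apply Finset.prod_le_prod' 
      intro k _
      apply hmono.monotone
      have := strictMono_le (fun k => T'.orderEmbOfFin hT'card k)
        ((T'.orderEmbOfFin hT'card).strictMono) k.1 k.2
      simp only [Fin.eta] at this
      exact Fin.le_def.mpr (by simpa using this)
    -- product over T' divides j - i
    have hdvd : (∏ t ∈ T', nn t) ∣ (j - i) := by
      have hdvd' : ∀ t ∈ T', nn t ∣ (j - i) := by
        intro t htT'
        have ht : i % nn t = j % nn t := by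
          have := hT'sub htT'
          simpa [hT] using this
        have h1 := Nat.div_add_mod i (nn t)
        have h2 := Nat.div_add_mod j (nn t)
        have heq : j - i = nn t * (j / nn t) - nn t * (i / nn t) := by omega
        rw [heq]
        exact Nat.dvd_sub (Dvd.intro _ rfl) (Dvd.intro _ rfl)
      -- use coprimality over ℤ
      have hint : ((∏ t ∈ T', nn t : ℕ) : ℤ) ∣ ((j - i : ℕ) : ℤ) := by
        push_cast
        apply Finset.prod_dvd_of_coprime
        · intro s hs t ht hst
          exact Nat.isCoprime_iff_coprime.mpr (hcop s t hst)
        · intro t ht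
          exact_mod_cast Int.natCast_dvd_natCast.mpr (hdvd' t ht)
      exact_mod_cast hint
    have hpos' : 0 < j - i := by omega
    have := Nat.le_of_dvd hpos' hdvd
    omega
  refine ⟨fun i _ => part1 i, fun i _ => part2 i, part3, ?_⟩
  intro i j hiM hjM hij hSeq
  have hγℓ : γ < ℓ := by omega
  rcases Nat.lt_or_ge i j with h | h
  · have := part3 i j h hjM
    rw [hSeq, Finset.inter_self, part2 j] at this
    omega
  · have hji : j < i := by omega
    have := part3 j i hji hiM
    rw [← hSeq, Finset.inter_self, part2 i] at this
    omega
end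

section
/- Let ℓ and γ be natural numbers with ℓ ≥ 2 and γ + 1 ≤ ℓ, and let n be a natural number with n ≥ 4ℓ²·ln(4ℓ). Then there exists an (n, ℓ, γ)-sharing set family of size m for some natural number m with m ≥ (2ℓ·ln(2ℓ))^{γ+1}; in particular m(n, ℓ, γ) ≥ (2ℓ·ln(2ℓ))^{γ+1}. -/
/-!
Reed–Solomon construction. For a prime `q ≥ ℓ`, every polynomial `p` of degree at most `γ`
over `𝔽_q` gives the `ℓ`-set `{(z, p z) | z < ℓ}` inside the grid `ℓ × q` of size `ℓ q`. Two
distinct such graphs meet only where `p - p'` vanishes, i.e. in at most `γ` points, and there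
are `q ^ (γ + 1)` of them. Bertrand's postulate provides a prime `q ∈ [x, 2x + 2)` with
`x = 2ℓ log 2ℓ`; then `ℓ ≤ q` and `ℓ q ≤ 4ℓ² log 4ℓ ≤ n`.
-/

open Finset Polynomial

def IsSharingFamily {ι : Type*} (n ℓ γ : ℕ) (S : ι → Finset ℕ) : Prop :=
  Function.Injective S ∧ (∀ i, S i ⊆ Icc 1 n) ∧ (∀ i, #(S i) = ℓ) ∧
    ∀ i j, i ≠ j → #(S i ∩ S j) ≤ γ

namespace IsSharingFamily

variable {ι κ : Type*} {n ℓ γ : ℕ} {S : ι → Finset ℕ}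

theorem of_card_inter_le (hγ : γ < ℓ) (hS : ∀ i, S i ⊆ Icc 1 n) (hcard : ∀ i, #(S i) = ℓ)
    (hinter : ∀ i j, i ≠ j → #(S i ∩ S j) ≤ γ) : IsSharingFamily n ℓ γ S := by
  refine ⟨fun i j hij => ?_, hS, hcard, hinter⟩
  by_contra hne
  have := hinter i j hne
  rw [hij, inter_self, hcard] at this
  omega

theorem mono {n' : ℕ} (hS : IsSharingFamily n ℓ γ S) (hn : n ≤ n') : IsSharingFamily n' ℓ γ S :=
  ⟨hS.1, fun i => (hS.2.1 i).trans (Icc_subset_Icc_right hn), hS.2.2⟩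

theorem comp_injective (hS : IsSharingFamily n ℓ γ S) {f : κ → ι} (hf : f.Injective) :
    IsSharingFamily n ℓ γ (S ∘ f) :=
  ⟨hS.1.comp hf, fun i => hS.2.1 (f i), fun i => hS.2.2.1 (f i),
    fun _ _ hij => hS.2.2.2 _ _ (hf.ne hij)⟩

end IsSharingFamily

theorem Polynomial.card_filter_eval_eq_le {R : Type*} [CommRing R] [IsDomain R] [DecidableEq R]
    {p p' : R[X]} (h : p ≠ p') (s : Finset R) :
    #{z ∈ s | p.eval z = p'.eval z} ≤ (p - p').natDegree := by
  refine card_le_degree_of_subset_roots fun z hz => ?_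
  rw [mem_roots (sub_ne_zero.2 h), IsRoot, eval_sub, sub_eq_zero]
  exact (mem_filter.1 hz).2

theorem Nat.mul_add_inj_of_lt {q x y a b : ℕ} (ha : a < q) (hb : b < q)
    (h : q * x + a = q * y + b) : x = y ∧ a = b := by
  have hq : 0 < q := a.zero_le.trans_lt ha
  have hx : x = (q * x + a) / q := by rw [Nat.mul_add_div hq, Nat.div_eq_of_lt ha, add_zero]
  have hy : y = (q * y + b) / q := by rw [Nat.mul_add_div hq, Nat.div_eq_of_lt hb, add_zero]
  have hxy : x = y := by rw [hx, hy, h]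
  subst hxy
  exact ⟨rfl, by omega⟩

section PolyGraph

variable {q ℓ : ℕ}

/-- The graph `{(z, p z) | z < ℓ}` of `p` on the grid `ℓ × q`, with the point `(z, w)`
encoded as the number `q z + w + 1 ∈ [1, ℓ q]`. -/
def polyGraph (q ℓ : ℕ) (p : (ZMod q)[X]) : Finset ℕ :=
  (range ℓ).image fun z : ℕ => q * z + (p.eval (z : ZMod q)).val + 1

theorem polyGraph_point_inj [NeZero q] {p p' : (ZMod q)[X]} {z w : ℕ}
    (h : q * z + (p.eval (z : ZMod q)).val + 1 = q * w + (p'.eval (w : ZMod q)).val + 1) :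
    z = w ∧ p.eval (z : ZMod q) = p'.eval (w : ZMod q) := by
  obtain ⟨hzw, hval⟩ := Nat.mul_add_inj_of_lt (ZMod.val_lt _) (ZMod.val_lt _) (Nat.succ_inj.1 h)
  exact ⟨hzw, ZMod.val_injective q hval⟩

theorem card_polyGraph [NeZero q] (p : (ZMod q)[X]) : #(polyGraph q ℓ p) = ℓ := by
  rw [polyGraph, card_image_of_injective _ fun z w h => (polyGraph_point_inj h).1, card_range]

theorem polyGraph_subset_Icc [NeZero q] (p : (ZMod q)[X]) : polyGraph q ℓ p ⊆ Icc 1 (ℓ * q) := by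
  intro a ha
  obtain ⟨z, hz, rfl⟩ := mem_image.1 ha
  have hv := ZMod.val_lt (p.eval (z : ZMod q))
  have hzℓ : q * (z + 1) ≤ q * ℓ := Nat.mul_le_mul_left q (mem_range.1 hz)
  rw [mem_Icc]
  constructor <;> nlinarith

theorem card_polyGraph_inter_le [Fact q.Prime] (hℓq : ℓ ≤ q) {p p' : (ZMod q)[X]} (h : p ≠ p') :
    #(polyGraph q ℓ p ∩ polyGraph q ℓ p') ≤ (p - p').natDegree := by
  have hsub : polyGraph q ℓ p ∩ polyGraph q ℓ p' ⊆
      {z ∈ range ℓ | p.eval ((z : ℕ) : ZMod q) = p'.eval (z : ZMod q)}.image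
        fun z : ℕ => q * z + (p.eval (z : ZMod q)).val + 1 := by
    intro a ha
    obtain ⟨ha, ha'⟩ := mem_inter.1 ha
    obtain ⟨z, hz, rfl⟩ := mem_image.1 ha
    obtain ⟨w, -, hwz⟩ := mem_image.1 ha'
    obtain ⟨rfl, hwz⟩ := polyGraph_point_inj hwz
    exact mem_image_of_mem _ (mem_filter.2 ⟨hz, hwz.symm⟩)
  have hcast : #{z ∈ range ℓ | p.eval ((z : ℕ) : ZMod q) = p'.eval (z : ZMod q)} ≤
      #{z ∈ univ | p.eval z = p'.eval z} := by
    refine card_le_card_of_injOn (fun z : ℕ => (z : ZMod q)) (fun z hz => ?_) fun z hz w hw hzw => ?_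
    · simpa using (mem_filter.1 hz).2
    · simp only [coe_filter, mem_range, Set.mem_ofPred_eq] at hz hw
      simpa [ZMod.val_cast_of_lt (hz.1.trans_le hℓq), ZMod.val_cast_of_lt (hw.1.trans_le hℓq)]
        using congrArg ZMod.val hzw
  exact (card_le_card hsub).trans <| card_image_le.trans <| hcast.trans <|
    card_filter_eval_eq_le h univ

end PolyGraph

theorem isSharingFamily_polyGraph {q ℓ γ : ℕ} [Fact q.Prime] (hγ : γ < ℓ) (hℓq : ℓ ≤ q) :
    IsSharingFamily (ℓ * q) ℓ γ fun p : degreeLE (ZMod q) γ => polyGraph q ℓ p := by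
  refine .of_card_inter_le hγ (fun p => polyGraph_subset_Icc _) (fun p => card_polyGraph _)
    fun p p' h => (card_polyGraph_inter_le hℓq (Subtype.coe_injective.ne h)).trans ?_
  exact natDegree_le_iff_degree_le.2 <| mem_degreeLE.1 (sub_mem p.2 p'.2)

theorem exists_isSharingFamily_of_prime {q ℓ γ n : ℕ} (hq : q.Prime) (hγ : γ < ℓ)
    (hℓq : ℓ ≤ q) (hn : ℓ * q ≤ n) :
    ∃ S : Fin (q ^ (γ + 1)) → Finset ℕ, IsSharingFamily n ℓ γ S := by
  have := Fact.mk hq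
  let e : Fin (q ^ (γ + 1)) ≃ degreeLE (ZMod q) γ :=
    (Fintype.equivFinOfCardEq (by simp)).symm.trans
      ((degreeLTEquiv (ZMod q) (γ + 1)).symm.trans
        (LinearEquiv.ofEq _ _ degreeLT_succ_eq_degreeLE)).toEquiv
  exact ⟨_, ((isSharingFamily_polyGraph hγ hℓq).mono hn).comp_injective e.injective⟩

theorem exists_prime_le_and_lt_two_mul_add_two {x : ℝ} (hx : 0 < x) :
    ∃ q : ℕ, q.Prime ∧ x ≤ q ∧ (q : ℝ) < 2 * x + 2 := by
  obtain ⟨q, hq, hxq, hq2⟩ := Nat.exists_prime_lt_and_le_two_mul ⌈x⌉₊ (Nat.ceil_pos.2 hx).ne'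
  refine ⟨q, hq, (Nat.le_ceil x).trans (by exact_mod_cast hxq.le), ?_⟩
  have : (q : ℝ) ≤ 2 * ⌈x⌉₊ := by exact_mod_cast hq2
  linarith [Nat.ceil_lt_add_one hx.le]

/-- For n ≥ 4ℓ²·ln(4ℓ) there is an (n, ℓ, γ)-sharing set family of size
m ≥ (2ℓ·ln(2ℓ))^{γ+1}. -/
theorem stmt4 (ℓ γ n : ℕ) (hℓ : 2 ≤ ℓ) (hγ : γ + 1 ≤ ℓ)
    (hn : (4 * ℓ ^ 2 : ℝ) * Real.log (4 * ℓ) ≤ n) :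
    ∃ (m : ℕ) (S : Fin m → Finset ℕ),
      ((2 * ℓ * Real.log (2 * ℓ)) ^ (γ + 1) ≤ (m : ℝ)) ∧
      Function.Injective S ∧
      (∀ i, S i ⊆ Finset.Icc 1 n) ∧
      (∀ i, (S i).card = ℓ) ∧
      (∀ i j, i ≠ j → (S i ∩ S j).card ≤ γ) := by
  have hℓR : (2 : ℝ) ≤ ℓ := by exact_mod_cast hℓ
  have hlog : 1 ≤ Real.log (2 * ℓ) :=
    (Real.le_log_iff_exp_le (by positivity)).2 (by linarith [Real.exp_one_lt_d9])
  set x := 2 * (ℓ : ℝ) * Real.log (2 * ℓ)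
  obtain ⟨q, hq, hxq, hqx⟩ := exists_prime_le_and_lt_two_mul_add_two (x := x) (by positivity)
  have hℓq : ℓ ≤ q := by exact_mod_cast (show (ℓ : ℝ) ≤ q by nlinarith)
  have hqn : ℓ * q ≤ n := by
    have hlog4 : Real.log (4 * ℓ) = Real.log 2 + Real.log (2 * ℓ) := by
      rw [← Real.log_mul two_ne_zero (by positivity)]; ring_nf
    have : (ℓ : ℝ) * q ≤ n := by nlinarith [Real.log_two_gt_d9]
    exact_mod_cast this
  obtain ⟨S, hS⟩ := exists_isSharingFamily_of_prime hq hγ hℓq hqn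
  refine ⟨_, S, ?_, hS⟩
  calc x ^ (γ + 1) ≤ (q : ℝ) ^ (γ + 1) := pow_le_pow_left₀ (by positivity) hxq _
    _ = _ := by push_cast; ring
end

section
/- Let n ≥ 2 be an integer and let S be a finite set of integers such that every s ∈ S satisfies n/2 < s ≤ n and the elements of S are pairwise coprime (gcd(s, t) = 1 for all distinct s, t ∈ S). Then |S| ≤ π(n) − π(⌊n/2⌋) + π(⌊√n⌋), where π(k) denotes the number of primes ≤ k. -/
lemma pc_card (m : ℕ) :
    Nat.primeCounting m = ((Finset.range (m + 1)).filter Nat.Prime).card := by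
  rw [Nat.primeCounting, Nat.primeCounting', Nat.count_eq_card_filter_range]

/-- A pairwise-coprime set S ⊆ (n/2, n] satisfies
|S| ≤ π(n) − π(⌊n/2⌋) + π(⌊√n⌋). -/
theorem stmt5 (n : ℕ) (hn : 2 ≤ n) (S : Finset ℕ)
    (hrange : ∀ s ∈ S, n < 2 * s ∧ s ≤ n)
    (hcop : ∀ s ∈ S, ∀ t ∈ S, s ≠ t → Nat.Coprime s t) :
    S.card ≤ Nat.primeCounting n - Nat.primeCounting (n / 2)
      + Nat.primeCounting (Nat.sqrt n) := by
  have h2 : ∀ s ∈ S, 2 ≤ s := by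
    intro s hs
    have h1 := (hrange s hs).1
    omega
  set T1 : Finset ℕ := (Finset.Ioc (n / 2) n).filter Nat.Prime with hT1
  set T2 : Finset ℕ := (Finset.range (Nat.sqrt n + 1)).filter Nat.Prime with hT2
  have himg : S.image Nat.minFac ⊆ T1 ∪ T2 := by
    intro p hp
    simp only [Finset.mem_image] at hp
    obtain ⟨s, hs, rfl⟩ := hp
    have hge := h2 s hs
    have hsp := Nat.minFac_prime (by omega : s ≠ 1)
    by_cases hprime : Nat.Prime s
    · apply Finset.mem_union_left
      rw [hT1, Finset.mem_filter, Finset.mem_Ioc]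
      rcases hrange s hs with ⟨hl, hr⟩
      have hle := h2 s hs
      rw [hprime.minFac_eq]
      exact ⟨⟨by omega, hr⟩, hprime⟩
    · apply Finset.mem_union_right
      rw [hT2, Finset.mem_filter, Finset.mem_range]
      have hsq : s.minFac ^ 2 ≤ s := Nat.minFac_sq_le_self (by omega) hprime
      have : s.minFac ≤ Nat.sqrt n :=
        Nat.le_sqrt'.2 (hsq.trans (hrange s hs).2)
      exact ⟨by omega, hsp⟩
  have hinj : Set.InjOn Nat.minFac S := by
    intro s hs t ht hst
    by_contra hne
    have hc := hcop s hs t ht hne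
    have hd : s.minFac ∣ Nat.gcd s t :=
      Nat.dvd_gcd (Nat.minFac_dvd s) (hst ▸ Nat.minFac_dvd t)
    rw [hc] at hd
    have hge := h2 s hs
    exact Nat.Prime.ne_one (Nat.minFac_prime (by omega)) (Nat.eq_one_of_dvd_one hd)
  have hcard : S.card = (S.image Nat.minFac).card :=
    (Finset.card_image_of_injOn hinj).symm
  have hT1card : T1.card = Nat.primeCounting n - Nat.primeCounting (n / 2) := by
    rw [pc_card, pc_card]
    have hsub : (Finset.range (n / 2 + 1)).filter Nat.Prime ⊆
        (Finset.range (n + 1)).filter Nat.Prime := by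
      apply Finset.filter_subset_filter
      apply Finset.range_subset_range.2; omega
    rw [← Finset.card_sdiff_of_subset hsub]
    congr 1
    rw [hT1]
    ext x
    simp only [Finset.mem_sdiff, Finset.mem_range, Finset.mem_Ioc, Finset.mem_filter]
    by_cases hx : Nat.Prime x
    · simp only [hx, and_true, not_and]; omega
    · simp [hx]
  calc S.card = (S.image Nat.minFac).card := hcard
    _ ≤ (T1 ∪ T2).card := Finset.card_le_card himg
    _ ≤ T1.card + T2.card := Finset.card_union_le _ _
    _ ≤ _ := by rw [hT1card, pc_card (Nat.sqrt n)]
end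

section
/- Let ℓ ≥ 2 and γ be natural numbers such that 2^γ ≥ 1 + 1/(ln(2ℓ) − 1), let n be a natural number with n ≥ 4ℓ²·ln(4ℓ), and let m ≥ 1 be any natural number. Then there exists a weak (n, ℓ, γ)-sharing set family S_1, …, S_m of size m; that is, each S_i ⊆ {1,…,n} has exactly ℓ elements and for every i ∈ {1,…,m} one has Σ_{j<i} 2^{|S_i ∩ S_j|} ≤ 2^γ·(m − 1). -/
/-!
Take ℓ primes `p > 2ℓ` whose sum is at most `n`: there are at least `ℓ` primes in
`(2ℓ, 4ℓ ln 4ℓ]`, by Chebyshev's bound `π x · ln x ≥ x ln 2 - ln (x + 1)` together with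
`3 π(2ℓ) ≤ 2ℓ + 9` (small `ℓ` are checked by computation). Let `S_i` be the set of pairs
`(p, i mod p)`, laid out in disjoint blocks of lengths `p` inside `{1, …, n}`. Then
`|S_i ∩ S_j|` is the number of chosen primes dividing `i - j`. Expanding `2 ^ |S_i ∩ S_j|`
as a count of subsets `T` of these primes and summing over `j < i` gives at most
`∑_T i / ∏ T ≤ i ∏ (1 + 1/p) ≤ i e^{1/2} ≤ 2i`, and `2 ≤ 2^γ` because `ln (2ℓ) > 1`.
-/

open Finset
open scoped Nat.Prime

theorem prod_dvd_iff_forall_dvd_of_pairwise_coprime {T : Finset ℕ}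
    (hT : (T : Set ℕ).Pairwise Nat.Coprime) (d : ℕ) : (∏ p ∈ T, p) ∣ d ↔ ∀ p ∈ T, p ∣ d := by
  refine ⟨fun h p hp => (dvd_prod_of_mem _ hp).trans h, prod_dvd_of_isRelPrime ?_⟩
  exact fun p hp q hq hpq => Nat.coprime_iff_isRelPrime.mp (hT hp hq hpq)

theorem sum_two_pow_card_filter_dvd {F : Finset ℕ} (hF : (F : Set ℕ).Pairwise Nat.Coprime)
    (N : ℕ) :
    ∑ d ∈ Ioc 0 N, 2 ^ #{p ∈ F | p ∣ d} = ∑ T ∈ F.powerset, N / ∏ p ∈ T, p := calc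
  ∑ d ∈ Ioc 0 N, 2 ^ #{p ∈ F | p ∣ d}
      = ∑ d ∈ Ioc 0 N, #(F.powerset.bipartiteAbove (fun d T => ∀ p ∈ T, p ∣ d) d) := by
    refine sum_congr rfl fun d _ => ?_
    rw [← card_powerset]
    congr 1
    ext T
    simp only [mem_powerset, bipartiteAbove, mem_filter, subset_iff]
    grind
  _ = ∑ T ∈ F.powerset, #((Ioc 0 N).bipartiteBelow (fun d T => ∀ p ∈ T, p ∣ d) T) :=
    sum_card_bipartiteAbove_eq_sum_card_bipartiteBelow _
  _ = ∑ T ∈ F.powerset, N / ∏ p ∈ T, p := by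
    refine sum_congr rfl fun T hT => ?_
    rw [← Nat.Ioc_filter_dvd_card_eq_div]
    congr 1
    ext d
    simp [bipartiteBelow,
      prod_dvd_iff_forall_dvd_of_pairwise_coprime (hF.mono (coe_subset.mpr (mem_powerset.mp hT)))]

theorem sum_div_prod_le_mul_prod_one_add_inv (F : Finset ℕ) (N : ℕ) :
    (∑ T ∈ F.powerset, N / ∏ p ∈ T, p : ℕ) ≤ (N : ℝ) * ∏ p ∈ F, (1 + (p : ℝ)⁻¹) := calc
  ((∑ T ∈ F.powerset, N / ∏ p ∈ T, p : ℕ) : ℝ)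
      ≤ ∑ T ∈ F.powerset, (N : ℝ) / ∏ p ∈ T, (p : ℝ) := by
    push_cast
    gcongr with T
    rw [← Nat.cast_prod]
    exact Nat.cast_div_le
  _ = (N : ℝ) * ∏ p ∈ F, (1 + (p : ℝ)⁻¹) := by
    simp only [prod_one_add, mul_sum, div_eq_mul_inv, prod_inv_distrib]

theorem prod_one_add_inv_le_two {F : Finset ℕ} (hF : ∀ p ∈ F, 2 * #F < p) :
    ∏ p ∈ F, (1 + (p : ℝ)⁻¹) ≤ 2 := by
  have hsum : ∑ p ∈ F, (p : ℝ)⁻¹ ≤ 1 / 2 := by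
    rcases F.eq_empty_or_nonempty with rfl | hne
    · norm_num
    calc ∑ p ∈ F, (p : ℝ)⁻¹ ≤ ∑ _p ∈ F, (2 * (#F : ℝ))⁻¹ := by
          gcongr with p hp
          exact_mod_cast (hF p hp).le
      _ = 1 / 2 := by
        have : (#F : ℝ) ≠ 0 := by positivity
        rw [sum_const, nsmul_eq_mul]
        field_simp
  calc ∏ p ∈ F, (1 + (p : ℝ)⁻¹) ≤ Real.exp (∑ p ∈ F, (p : ℝ)⁻¹) :=
        Real.prod_one_add_le_exp_sum F fun p => by positivity
    _ ≤ Real.exp (Real.log 2) := by gcongr; linarith [Real.log_two_gt_d9]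
    _ = 2 := Real.exp_log two_pos

theorem sum_two_pow_card_filter_dvd_le_two_mul {F : Finset ℕ}
    (hF : (F : Set ℕ).Pairwise Nat.Coprime) (hlarge : ∀ p ∈ F, 2 * #F < p) (N : ℕ) :
    ∑ d ∈ Ioc 0 N, 2 ^ #{p ∈ F | p ∣ d} ≤ 2 * N := by
  rw [sum_two_pow_card_filter_dvd hF]
  have := (sum_div_prod_le_mul_prod_one_add_inv F N).trans
    (mul_le_mul_of_nonneg_left (prod_one_add_inv_le_two hlarge) N.cast_nonneg)
  exact_mod_cast this.trans_eq (mul_comm _ _)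

theorem sum_range_two_pow_card_mod_eq (F : Finset ℕ) (i : ℕ) :
    ∑ j ∈ range i, 2 ^ #{p ∈ F | i % p = j % p} = ∑ d ∈ Ioc 0 i, 2 ^ #{p ∈ F | p ∣ d} := by
  refine sum_nbij' (fun j => i - j) (fun d => i - d)
    (fun j hj => by simp only [mem_range, mem_Ioc] at hj ⊢; omega)
    (fun d hd => by simp only [mem_range, mem_Ioc] at hd ⊢; omega)
    (fun j hj => by simp only [mem_range] at hj; omega)
    (fun d hd => by simp only [mem_Ioc] at hd; omega) fun j hj => ?_
  have hji : j ≤ i := (mem_range.mp hj).le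
  simp_rw [eq_comm (a := i % _), ← Nat.modEq_iff_dvd' hji]
  rfl

theorem exists_injOn_mapsTo_Icc {α : Type*} (s : Finset α) {n : ℕ} (hs : #s ≤ n) :
    ∃ g : α → ℕ, Set.InjOn g s ∧ Set.MapsTo g s (Icc 1 n) := by
  classical
  refine ⟨fun a => if h : a ∈ s then s.equivFin ⟨a, h⟩ + 1 else 0, ?_, ?_⟩
  · intro a ha b hb hab
    simp only [dif_pos (mem_coe.1 ha), dif_pos (mem_coe.1 hb), add_left_inj] at hab
    simpa using s.equivFin.injective (Fin.ext hab)
  · intro a ha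
    have := (s.equivFin ⟨a, ha⟩).isLt
    simp only [dif_pos (mem_coe.1 ha), coe_Icc, Set.mem_Icc]
    omega

def residues (F : Finset ℕ) (i : ℕ) : Finset (Σ _ : ℕ, ℕ) :=
  F.image fun p => ⟨p, i % p⟩

theorem card_residues (F : Finset ℕ) (i : ℕ) : #(residues F i) = #F :=
  card_image_of_injective _ fun _ _ h => congrArg Sigma.fst h

theorem residues_inter (F : Finset ℕ) (i j : ℕ) :
    residues F i ∩ residues F j = residues {p ∈ F | i % p = j % p} i := by
  ext ⟨p, r⟩
  simp only [residues, mem_inter, mem_image, mem_filter, Sigma.mk.injEq, heq_eq_eq]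
  grind

theorem residues_subset_sigma {F : Finset ℕ} (h0 : 0 ∉ F) (i : ℕ) :
    residues F i ⊆ F.sigma fun p => range p := by
  intro x hx
  obtain ⟨p, hp, rfl⟩ := mem_image.mp hx
  exact mem_sigma.mpr
    ⟨hp, mem_range.mpr (Nat.mod_lt _ (Nat.pos_of_ne_zero (ne_of_mem_of_not_mem hp h0)))⟩

theorem exists_residue_family {F : Finset ℕ} (h0 : 0 ∉ F) {n : ℕ} (hn : ∑ p ∈ F, p ≤ n) :
    ∃ S : ℕ → Finset ℕ, (∀ i, S i ⊆ Icc 1 n) ∧ (∀ i, #(S i) = #F) ∧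
      ∀ i j, #(S i ∩ S j) = #{p ∈ F | i % p = j % p} := by
  obtain ⟨g, hg_inj, hg_maps⟩ :=
    exists_injOn_mapsTo_Icc (F.sigma fun p => range p) (by simpa [card_sigma] using hn)
  have hsub := residues_subset_sigma h0
  have hinj (i : ℕ) : Set.InjOn g (residues F i) := hg_inj.mono (by exact_mod_cast hsub i)
  refine ⟨fun i => (residues F i).image g, fun i x hx => ?_, fun i => ?_, fun i j => ?_⟩
  · obtain ⟨a, ha, rfl⟩ := mem_image.mp hx
    exact hg_maps (hsub i ha)
  · rw [card_image_of_injOn (hinj i), card_residues]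
  · have hinj_union : Set.InjOn g (↑(residues F i) ∪ ↑(residues F j)) :=
      hg_inj.mono (by exact_mod_cast union_subset (hsub i) (hsub j))
    rw [← image_inter_of_injOn _ _ hinj_union,
      card_image_of_injOn ((hinj i).mono (by exact_mod_cast inter_subset_left)),
      residues_inter, card_residues]

theorem log_le_div_exp_one {x : ℝ} (hx : 0 < x) : Real.log x ≤ x / Real.exp 1 := by
  have h := Real.log_le_sub_one_of_pos (div_pos hx (Real.exp_pos 1))
  rw [Real.log_div hx.ne' (Real.exp_pos 1).ne', Real.log_exp] at h
  linarith

theorem one_lt_log_two_mul {ℓ : ℕ} (hℓ : 2 ≤ ℓ) : 1 < Real.log (2 * ℓ) := by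
  have hℓ' : (2 : ℝ) ≤ ℓ := by exact_mod_cast hℓ
  rw [Real.lt_log_iff_exp_lt (by positivity)]
  linarith [Real.exp_one_lt_d9]

theorem two_le_log_four_mul {ℓ : ℕ} (hℓ : 2 ≤ ℓ) : 2 ≤ Real.log (4 * ℓ) := by
  have hℓ' : (2 : ℝ) ≤ ℓ := by exact_mod_cast hℓ
  rw [Real.le_log_iff_exp_le (by positivity), show (2 : ℝ) = 1 + 1 by norm_num, Real.exp_add]
  nlinarith [Real.exp_one_lt_d9, Real.exp_pos 1]

theorem log_floor_mul_log_le {ℓ : ℕ} (hℓ : 2 ≤ ℓ) :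
    Real.log ⌊4 * ℓ * Real.log (4 * ℓ)⌋₊ ≤ 7 / 5 * Real.log (4 * ℓ) := by
  set u := Real.log (4 * ℓ)
  have hu : 2 ≤ u := two_le_log_four_mul hℓ
  have hℓ' : (2 : ℝ) ≤ ℓ := by exact_mod_cast hℓ
  have hK : 1 ≤ ⌊4 * ℓ * u⌋₊ := Nat.le_floor (by push_cast; nlinarith)
  calc Real.log ⌊4 * ℓ * u⌋₊ ≤ Real.log (4 * ℓ * u) :=
        Real.log_le_log (by exact_mod_cast hK) (Nat.floor_le (by positivity))
    _ = u + Real.log u := Real.log_mul (by positivity) (by positivity)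
    _ ≤ 7 / 5 * u := by
      have := log_le_div_exp_one (x := u) (by positivity)
      have : u / Real.exp 1 ≤ 2 / 5 * u := by
        rw [div_le_iff₀ (Real.exp_pos 1)]
        nlinarith [Real.exp_one_gt_d9]
      linarith

theorem three_mul_primeCounting_le (n : ℕ) : 3 * π n ≤ n + 9 := by
  have hπ6 : π 6 = 3 := by decide
  rcases le_or_gt n 6 with hn | hn
  · have := Nat.monotone_primeCounting hn
    omega
  · have h := Nat.primeCounting_add_le (a := 6) (k := 6) (by norm_num) le_rfl (n - 6)
    -- Primes above 6 are coprime to 6, so at most two lie in any six consecutive integers.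
    rw [Nat.add_sub_cancel' hn.le, hπ6, show Nat.totient 6 = 2 by decide] at h
    omega

theorem five_mul_add_nine_le_three_mul_primeCounting {ℓ : ℕ} (hℓ : 20 ≤ ℓ) :
    5 * ℓ + 9 ≤ 3 * π ⌊4 * ℓ * Real.log (4 * ℓ)⌋₊ := by
  set u := Real.log (4 * ℓ)
  set K := ⌊4 * ℓ * u⌋₊
  have hℓ' : (20 : ℝ) ≤ ℓ := by exact_mod_cast hℓ
  have hu : 2 ≤ u := two_le_log_four_mul (by omega)
  have hK : 4 * ℓ * u - 1 < K := Nat.sub_one_lt_floor _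
  have hK2 : (2 : ℝ) ≤ K := by nlinarith
  have hlogK : Real.log K ≤ 7 / 5 * u := log_floor_mul_log_le (by omega)
  have hlogK_pos : 0 < Real.log K := Real.log_pos (by linarith)
  have hlogK1 : Real.log (K + 1) ≤ Real.log 2 + Real.log K := by
    rw [← Real.log_mul two_ne_zero (by positivity)]
    exact Real.log_le_log (by positivity) (by linarith)
  have hψ : K * Real.log 2 - Real.log (K + 1) ≤ π K * Real.log K :=
    (Chebyshev.psi_ge K).trans (Chebyshev.psi_le_primeCounting_mul_log K)
  have key : (5 * ℓ + 9) / 3 * Real.log K ≤ π K * Real.log K := by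
    have h1 : (5 * ℓ + 12) / 3 * Real.log K ≤ (5 * ℓ + 12) / 3 * (7 / 5 * u) := by gcongr
    have h2 : (5 * ℓ + 12) / 3 * (7 / 5 * u) ≤ (4 * ℓ * u - 2) * Real.log 2 := by
      nlinarith [Real.log_two_gt_d9, mul_le_mul_of_nonneg_right hℓ' (by linarith : (0 : ℝ) ≤ u)]
    have h3 : (4 * ℓ * u - 1) * Real.log 2 ≤ K * Real.log 2 :=
      mul_le_mul_of_nonneg_right hK.le (by positivity)
    linarith
  have := le_of_mul_le_mul_right key hlogK_pos
  rw [div_le_iff₀ (by norm_num)] at this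
  exact_mod_cast (by push_cast; linarith : ((5 * ℓ + 9 : ℕ) : ℝ) ≤ ((3 * π K : ℕ) : ℝ))

set_option maxRecDepth 10000 in
theorem le_primeCounting_eight_mul {ℓ : ℕ} (hℓ : ℓ < 20) : ℓ + π (2 * ℓ) ≤ π (8 * ℓ) := by
  revert ℓ
  decide

theorem le_primeCounting_floor {ℓ : ℕ} (hℓ : 2 ≤ ℓ) :
    ℓ + π (2 * ℓ) ≤ π ⌊4 * ℓ * Real.log (4 * ℓ)⌋₊ := by
  rcases lt_or_ge ℓ 20 with hsmall | hlarge
  · refine (le_primeCounting_eight_mul hsmall).trans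
      (Nat.monotone_primeCounting (Nat.le_floor ?_))
    push_cast
    nlinarith [two_le_log_four_mul hℓ]
  · have := three_mul_primeCounting_le (2 * ℓ)
    have := five_mul_add_nine_le_three_mul_primeCounting hlarge
    omega

theorem exists_primes_sum_le {ℓ : ℕ} (hℓ : 2 ≤ ℓ) :
    ∃ F : Finset ℕ, #F = ℓ ∧ (∀ p ∈ F, p.Prime ∧ 2 * ℓ < p) ∧
      (∑ p ∈ F, p : ℝ) ≤ 4 * ℓ ^ 2 * Real.log (4 * ℓ) := by
  have hπ := le_primeCounting_floor hℓ
  set K := ⌊4 * ℓ * Real.log (4 * ℓ)⌋₊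
  have hcard : ℓ ≤ #(Nat.primesLE K \ Nat.primesLE (2 * ℓ)) := by
    refine le_trans ?_ (le_card_sdiff _ _)
    simp only [Nat.primesLE_card_eq_primeCounting]
    omega
  obtain ⟨F, hFsub, hFcard⟩ := exists_subset_card_eq hcard
  have hmem (p : ℕ) (hp : p ∈ F) : p.Prime ∧ 2 * ℓ < p ∧ p ≤ K := by
    have := hFsub hp
    simp only [mem_sdiff, Nat.mem_primesLE, not_and] at this
    exact ⟨this.1.2, by grind, this.1.1⟩
  refine ⟨F, hFcard, fun p hp => ⟨(hmem p hp).1, (hmem p hp).2.1⟩, ?_⟩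
  calc (∑ p ∈ F, p : ℝ) ≤ ∑ _p ∈ F, 4 * ℓ * Real.log (4 * ℓ) := by
        gcongr with p hp
        exact (Nat.le_floor_iff (by positivity [two_le_log_four_mul hℓ])).mp (hmem p hp).2.2
    _ = 4 * ℓ ^ 2 * Real.log (4 * ℓ) := by
        rw [sum_const, hFcard, nsmul_eq_mul]
        ring

theorem stmt6_general (ℓ γ n m : ℕ) (hℓ : 2 ≤ ℓ)
    (hγ : (1 : ℝ) + 1 / (Real.log (2 * ℓ) - 1) ≤ 2 ^ γ)
    (hn : (4 * ℓ ^ 2 : ℝ) * Real.log (4 * ℓ) ≤ n) :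
    ∃ S : Fin m → Finset ℕ,
      (∀ i, S i ⊆ Finset.Icc 1 n) ∧
      (∀ i, (S i).card = ℓ) ∧
      (∀ i : Fin m,
        ∑ j ∈ Finset.univ.filter (fun j => j < i), 2 ^ ((S i ∩ S j).card)
          ≤ 2 ^ γ * (m - 1)) := by
  have two_le_pow : 2 ≤ 2 ^ γ := by
    refine Nat.le_self_pow (fun hγ0 => ?_) 2
    have := one_div_pos.mpr (sub_pos.mpr (one_lt_log_two_mul hℓ))
    simp only [hγ0, pow_zero] at hγ
    linarith
  obtain ⟨F, hFcard, hFprime, hFsum⟩ := exists_primes_sum_le hℓ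
  have hcoprime : (F : Set ℕ).Pairwise Nat.Coprime := fun p hp q hq hpq =>
    (Nat.coprime_primes (hFprime p hp).1 (hFprime q hq).1).mpr hpq
  have hFsum_le : ∑ p ∈ F, p ≤ n := Nat.cast_le (α := ℝ) |>.mp (by push_cast; exact hFsum.trans hn)
  obtain ⟨S, hSsub, hScard, hSinter⟩ :=
    exists_residue_family (fun h0 => Nat.not_prime_zero (hFprime 0 h0).1) hFsum_le
  refine ⟨fun i => S i, fun i => hSsub i, fun i => (hScard i).trans hFcard, fun i => ?_⟩
  calc ∑ j ∈ univ.filter (fun j => j < i), 2 ^ #(S i ∩ S j)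
      = ∑ j ∈ range i, 2 ^ #{p ∈ F | (i : ℕ) % p = j % p} := by
        rw [filter_gt_eq_Iio, ← Nat.Iio_eq_range, ← Fin.map_valEmbedding_Iio, sum_map]
        simp only [hSinter, Fin.valEmbedding_apply]
    _ = ∑ d ∈ Ioc 0 (i : ℕ), 2 ^ #{p ∈ F | p ∣ d} := sum_range_two_pow_card_mod_eq F i
    _ ≤ 2 * (i : ℕ) := sum_two_pow_card_filter_dvd_le_two_mul hcoprime
        (by rw [hFcard]; exact fun p hp => (hFprime p hp).2) i
    _ ≤ 2 ^ γ * (m - 1) := Nat.mul_le_mul two_le_pow (by omega)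

/-- Explicit construction of weak (n, ℓ, γ)-sharing set families of any size m,
provided 2^γ ≥ 1 + 1/(ln(2ℓ) − 1) and n ≥ 4ℓ²·ln(4ℓ). -/
theorem stmt6 (ℓ γ n m : ℕ) (hℓ : 2 ≤ ℓ)
    (hγ : (1 : ℝ) + 1 / (Real.log (2 * ℓ) - 1) ≤ 2 ^ γ)
    (hn : (4 * ℓ ^ 2 : ℝ) * Real.log (4 * ℓ) ≤ n) (hm : 1 ≤ m) :
    ∃ S : Fin m → Finset ℕ,
      (∀ i, S i ⊆ Finset.Icc 1 n) ∧
      (∀ i, (S i).card = ℓ) ∧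
      (∀ i : Fin m,
        ∑ j ∈ Finset.univ.filter (fun j => j < i), 2 ^ ((S i ∩ S j).card)
          ≤ 2 ^ γ * (m - 1)) :=
  stmt6_general ℓ γ n m hℓ hγ hn
end

section
/- Let S_1, …, S_m ⊆ {1,…,n} be an (n, ℓ, γ)-sharing set family of size m with ℓ ≥ γ + 1. Then m·C(ℓ, γ + 1) ≤ C(n, γ + 1); equivalently m(n, ℓ, γ) ≤ C(n, γ+1) / C(ℓ, γ+1). -/
/-! Double counting: a `(γ + 1)`-subset of `{1, …, n}` lies in at most one `S i`, since two
members share at most `γ` points, so the `m · C(ℓ, γ + 1)` such subsets of the `S i` are distinct. -/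

namespace Finset

variable {α ι : Type*} [DecidableEq α]

theorem disjoint_powersetCard_of_card_inter_lt {s t : Finset α} {k : ℕ} (h : (s ∩ t).card < k) :
    Disjoint (s.powersetCard k) (t.powersetCard k) := by
  refine disjoint_left.2 fun u hus hut => ?_
  rw [mem_powersetCard] at hus hut
  have hu : u.card ≤ (s ∩ t).card := card_le_card (subset_inter hus.1 hut.1)
  omega

theorem sum_card_choose_le_of_card_inter_lt {s : Finset ι} {S : ι → Finset α} {U : Finset α}
    {k : ℕ} (hsub : ∀ i ∈ s, S i ⊆ U)
    (hint : (s : Set ι).Pairwise fun i j => (S i ∩ S j).card < k) :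
    ∑ i ∈ s, (S i).card.choose k ≤ U.card.choose k := by
  have hdisj : (s : Set ι).PairwiseDisjoint fun i => (S i).powersetCard k :=
    fun i hi j hj hij => disjoint_powersetCard_of_card_inter_lt (hint hi hj hij)
  calc ∑ i ∈ s, (S i).card.choose k
      = (s.biUnion fun i => (S i).powersetCard k).card := by
        simp only [card_biUnion hdisj, card_powersetCard]
    _ ≤ (U.powersetCard k).card :=
        card_le_card <| biUnion_subset.2 fun i hi => powersetCard_mono (hsub i hi)
    _ = U.card.choose k := card_powersetCard k U

end Finset

theorem stmt18_general (n ℓ γ m : ℕ) (S : Fin m → Finset ℕ)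
    (hsub : ∀ i, S i ⊆ Finset.Icc 1 n) (hcard : ∀ i, (S i).card = ℓ)
    (hint : ∀ i j, i ≠ j → (S i ∩ S j).card ≤ γ) :
    m * ℓ.choose (γ + 1) ≤ n.choose (γ + 1) := by
  have key := Finset.sum_card_choose_le_of_card_inter_lt (s := Finset.univ) (U := Finset.Icc 1 n)
    (k := γ + 1) (fun i _ => hsub i) fun i _ j _ hij => Nat.lt_succ_of_le (hint i j hij)
  simpa [hcard] using key

/-- For an (n, ℓ, γ)-sharing set family of size m with ℓ ≥ γ + 1,
m·C(ℓ, γ+1) ≤ C(n, γ+1). -/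
theorem stmt18 (n ℓ γ m : ℕ) (h : γ + 1 ≤ ℓ) (S : Fin m → Finset ℕ)
    (hinj : Function.Injective S)
    (hsub : ∀ i, S i ⊆ Finset.Icc 1 n) (hcard : ∀ i, (S i).card = ℓ)
    (hint : ∀ i j, i ≠ j → (S i ∩ S j).card ≤ γ) :
    m * ℓ.choose (γ + 1) ≤ n.choose (γ + 1) :=
  stmt18_general n ℓ γ m S hsub hcard hint
end
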